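/- Let f be a transcendental entire function of finite order, i.e. limsup_{r→∞} (log log M(r))/(log r) < ∞, and suppose there exist n ∈ ℕ and 0 < q < 1 such that M(r) ≥ exp^{n+1}((log^n r)^q) for all sufficiently large r, where exp^{n+1} denotes the (n+1)-st iterate of the exponential function and log^n denotes the n-th iterate of the logarithm. Then f is weakly regular. -/

import Mathlib

open Set Filter

/-- The maximum modulus of `f` on the circle of radius `r`. -/
noncomputable def maxMod (f : ℂ → ℂ) (r : ℝ) : ℝ :=
  sSup ((fun z => ‖f z‖) '' {z : ℂ | ‖z‖ = r})

/-- The minimum modulus of `f` on the circle of radius `r`. -/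
noncomputable def minMod (f : ℂ → ℂ) (r : ℝ) : ℝ :=
  sInf ((fun z => ‖f z‖) '' {z : ℂ | ‖z‖ = r})

/-- `f` is a transcendental entire function: entire and not a polynomial. -/
def TranscendentalEntire (f : ℂ → ℂ) : Prop :=
  Differentiable ℂ f ∧ ¬ ∃ p : Polynomial ℂ, ∀ z, f z = p.eval z

/-- `μ_ε(r) = M(r)^ε`. -/
noncomputable def muEps (f : ℂ → ℂ) (ε : ℝ) (r : ℝ) : ℝ := (maxMod f r) ^ ε

/-- The fast escaping set `A(f)`. -/
def fastEscaping (f : ℂ → ℂ) : Set ℂ :=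
  {z : ℂ | ∀ R : ℝ, 0 < R → (∀ r ≥ R, r < maxMod f r) →
    ∃ ℓ : ℕ, ∀ n : ℕ, (maxMod f)^[n] R ≤ ‖f^[n + ℓ] z‖}

/-- The set `Q_ε(f)`. -/
def Qeps (f : ℂ → ℂ) (ε : ℝ) : Set ℂ :=
  {z : ℂ | ∀ R : ℝ, 0 < R → (∀ r ≥ R, r < muEps f ε r) →
    ∃ ℓ : ℕ, ∀ n : ℕ, (muEps f ε)^[n] R ≤ ‖f^[n + ℓ] z‖}

/-- The quite fast escaping set `Q(f) = ⋃_{0<ε<1} Q_ε(f)`. -/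
def Qset (f : ℂ → ℂ) : Set ℂ := ⋃ ε ∈ Ioo (0:ℝ) 1, Qeps f ε

/-- `f` is `ε`-regular. -/
def epsRegular (f : ℂ → ℂ) (ε : ℝ) : Prop :=
  ∀ R : ℝ, 0 < R → (∀ r ≥ R, r < maxMod f r) →
    ∃ r : ℝ, 0 < r ∧ ∀ n : ℕ, (maxMod f)^[n] R ≤ (muEps f ε)^[n] r

/-- `f` is weakly regular: `ε`-regular for every `ε ∈ (0,1)`. -/
def weaklyRegular (f : ℂ → ℂ) : Prop := ∀ ε ∈ Ioo (0:ℝ) 1, epsRegular f ε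

/-- `f` is log-regular (characterization from Corollary 4.3). -/
def logRegular (f : ℂ → ℂ) : Prop :=
  ∃ r₁ > (1:ℝ), ∃ k > (1:ℝ), ∃ d > (1:ℝ), ∀ r ≥ r₁,
    (maxMod f r) ^ (k * d) ≤ maxMod f (r ^ k)


/-!
Write `Eₘ` and `Lₘ` for the `m`-fold iterated exponential and logarithm. By the iteration
principle for `ε`-regularity it suffices to find `g` with `s ≤ g s` and `g (M s) ≤ M (g s) ^ ε`
for large `s`. We take `g = Eₘ ∘ (· ^ A) ∘ Lₘ` with `m = n + 2` and `A q = 2`. In the coordinate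
`w = Lₘ s`, finite order gives `Lₘ (M s) ≤ exp (2 w)`, so `g (M s) ≤ Eₘ₊₁ (2 A w)`, while the
growth hypothesis (which passes from `n` to every larger level) gives `M (g s) ≥ Eₘ₊₁ (w ^ 2)`;
and `Eₘ₊₁ (2 A w) ≤ Eₘ₊₁ (w ^ 2) ^ ε` for large `w` because the power `ε` only shifts the argument
of the innermost exponentials by the constant `log ε`.
-/

open Real

section IteratedExpLog

theorem expIter_strictMono (k : ℕ) : StrictMono (exp^[k]) := exp_strictMono.iterate k

theorem le_expIter (k : ℕ) (x : ℝ) : x ≤ exp^[k] x := by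
  induction k with
  | zero => exact le_rfl
  | succ k ih =>
    rw [Function.iterate_succ_apply']
    linarith [add_one_le_exp (exp^[k] x)]

theorem logIter_expIter (k : ℕ) (x : ℝ) : log^[k] (exp^[k] x) = x := by
  induction k with
  | zero => rfl
  | succ k ih =>
    rw [Function.iterate_succ_apply' exp, Function.iterate_succ_apply log, log_exp, ih]

theorem expIter_logIter {k : ℕ} {x : ℝ} (hx : exp^[k] 0 ≤ x) : exp^[k] (log^[k] x) = x := by
  induction k generalizing x with
  | zero => rfl
  | succ k ih =>
    rw [Function.iterate_succ_apply'] at hx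
    have hx₀ : 0 < x := (exp_pos _).trans_le hx
    rw [Function.iterate_succ_apply' exp, Function.iterate_succ_apply log,
      ih ((le_log_iff_exp_le hx₀).2 hx), exp_log hx₀]

theorem le_logIter_iff {k : ℕ} {a x : ℝ} (hx : exp^[k] 0 ≤ x) :
    a ≤ log^[k] x ↔ exp^[k] a ≤ x := by
  conv_rhs => rw [← expIter_logIter hx]
  exact (expIter_strictMono k).le_iff_le.symm

theorem one_le_logIter {k : ℕ} {x : ℝ} (hx : exp^[k] 1 ≤ x) : 1 ≤ log^[k] x :=
  (le_logIter_iff (((expIter_strictMono k).monotone zero_le_one).trans hx)).2 hx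

theorem logIter_le_logIter {k : ℕ} {x y : ℝ} (hx : exp^[k] 0 ≤ x) (hxy : x ≤ y) :
    log^[k] x ≤ log^[k] y := by
  rw [le_logIter_iff (hx.trans hxy), expIter_logIter hx]
  exact hxy

theorem tendsto_logIter_atTop (k : ℕ) : Tendsto (log^[k]) atTop atTop := by
  induction k with
  | zero => exact tendsto_id
  | succ k ih =>
    rw [Function.iterate_succ]
    exact ih.comp tendsto_log_atTop

theorem expIter_add_le (k : ℕ) {x c : ℝ} (hx : 0 ≤ x) (hc : 0 ≤ c) :
    exp^[k] x + c ≤ exp^[k] (x + c) := by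
  induction k with
  | zero => exact le_rfl
  | succ k ih =>
    rw [Function.iterate_succ_apply', Function.iterate_succ_apply']
    have hone : 1 ≤ exp (exp^[k] x) := one_le_exp (hx.trans (le_expIter k x))
    calc exp (exp^[k] x) + c ≤ exp (exp^[k] x) * exp c := by nlinarith [add_one_le_exp c]
      _ = exp (exp^[k] x + c) := (exp_add _ _).symm
      _ ≤ exp (exp^[k] (x + c)) := exp_le_exp.2 ih

theorem eventually_logIter_mul_self_le (k : ℕ) :
    ∀ᶠ x in atTop, log^[k] (x * x) ≤ log^[k] x * log^[k] x := by
  induction k with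
  | zero => exact Eventually.of_forall fun _ => le_rfl
  | succ k ih =>
    filter_upwards [eventually_gt_atTop 0,
      tendsto_log_atTop.eventually_ge_atTop (max 2 (exp^[k] 0)),
      tendsto_log_atTop.eventually ih] with x hx hlog hsq
    have htwo : 2 ≤ log x := le_of_max_le_left hlog
    have hthreshold : exp^[k] 0 ≤ log x + log x := by linarith [le_of_max_le_right hlog]
    rw [Function.iterate_succ_apply, Function.iterate_succ_apply, log_mul hx.ne' hx.ne']
    exact (logIter_le_logIter hthreshold (by nlinarith)).trans hsq

theorem eventually_rpow_le_mul {q c : ℝ} (hq : q < 1) (hc : 0 < c) :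
    ∀ᶠ v in atTop, v ^ q ≤ c * v := by
  filter_upwards [(tendsto_rpow_neg_atTop (sub_pos.2 hq)).eventually (gt_mem_nhds hc),
    eventually_gt_atTop 0] with v hv hv₀
  calc v ^ q = v ^ (-(1 - q)) * v := by
        rw [neg_sub, rpow_sub_one hv₀.ne', div_mul_cancel₀ _ hv₀.ne']
    _ ≤ c * v := mul_le_mul_of_nonneg_right hv.le hv₀.le

theorem eventually_exp_log_rpow_le {q : ℝ} (hq₀ : 0 < q) (hq₁ : q < 1) :
    ∀ᶠ u in atTop, exp (log u ^ q) ≤ u ^ q := by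
  filter_upwards [tendsto_log_atTop.eventually (eventually_rpow_le_mul hq₁ hq₀),
    eventually_gt_atTop 0] with u hu hu₀
  rw [rpow_def_of_pos hu₀, mul_comm]
  exact exp_le_exp.2 hu

theorem eventually_expIter_rpow_logIter_succ_le (n : ℕ) {q : ℝ} (hq₀ : 0 < q) (hq₁ : q < 1) :
    ∀ᶠ r in atTop, exp^[n + 2] ((log^[n + 1] r) ^ q) ≤ exp^[n + 1] ((log^[n] r) ^ q) := by
  filter_upwards [(tendsto_logIter_atTop n).eventually (eventually_exp_log_rpow_le hq₀ hq₁)]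
    with r hr
  rw [Function.iterate_succ_apply' log]
  exact (expIter_strictMono (n + 1)).monotone hr

theorem eventually_expIter_rpow_logIter_add_le (n j : ℕ) {q : ℝ} (hq₀ : 0 < q) (hq₁ : q < 1) :
    ∀ᶠ r in atTop, exp^[n + j + 1] ((log^[n + j] r) ^ q) ≤ exp^[n + 1] ((log^[n] r) ^ q) := by
  induction j with
  | zero => exact Eventually.of_forall fun _ => le_rfl
  | succ j ih =>
    filter_upwards [ih, eventually_expIter_rpow_logIter_succ_le (n + j) hq₀ hq₁] with r h₁ h₂
    exact h₂.trans h₁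

theorem eventually_logIter_exp_exp_le (k : ℕ) {ρ : ℝ} (hρ : 1 ≤ ρ) :
    ∀ᶠ s in atTop, log^[k + 2] (exp (exp (ρ * log s))) ≤ exp (2 * log^[k + 2] s) := by
  filter_upwards [tendsto_log_atTop.eventually_ge_atTop (max ρ (exp^[k] 0)),
    tendsto_log_atTop.eventually (eventually_logIter_mul_self_le k),
    eventually_ge_atTop (exp^[k + 1] 1)] with s hlog hsq hs
  have hρlog : ρ ≤ log s := le_of_max_le_left hlog
  have hthreshold : exp^[k] 0 ≤ ρ * log s := by nlinarith [le_of_max_le_right hlog]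
  have hpos : 0 < log^[k + 1] s := zero_lt_one.trans_le (one_le_logIter hs)
  calc log^[k + 2] (exp (exp (ρ * log s))) = log^[k] (ρ * log s) := by
        rw [Function.iterate_add_apply]
        exact congrArg _ (logIter_expIter 2 _)
    _ ≤ log^[k] (log s * log s) :=
        logIter_le_logIter hthreshold (mul_le_mul_of_nonneg_right hρlog (by linarith))
    _ ≤ log^[k + 1] s * log^[k + 1] s := hsq
    _ = exp (2 * log^[k + 2] s) := by
        rw [two_mul, exp_add, Function.iterate_succ_apply' _ (k + 1), exp_log hpos]

theorem eventually_expIter_le_rpow_expIter (k : ℕ) {a ε : ℝ} (ha : 0 ≤ a) (hε₀ : 0 < ε)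
    (hε₁ : ε ≤ 1) : ∀ᶠ w in atTop, exp^[k + 2] (a * w) ≤ exp^[k + 2] (w ^ 2) ^ ε := by
  have hc : 0 ≤ -log ε := neg_nonneg.2 (log_nonpos hε₀.le hε₁)
  filter_upwards [eventually_ge_atTop (max 1 (a - log ε))] with w hw
  have hw₁ : 1 ≤ w := le_of_max_le_left hw
  have hinner : exp^[k] (a * w) + -log ε ≤ exp^[k] (w ^ 2) :=
    (expIter_add_le k (by positivity) hc).trans
      ((expIter_strictMono k).monotone (by nlinarith [le_of_max_le_right hw]))
  simp only [Function.iterate_succ_apply']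
  rw [← exp_mul, exp_le_exp]
  calc exp (exp^[k] (a * w)) ≤ exp (exp^[k] (w ^ 2) + log ε) := exp_le_exp.2 (by linarith)
    _ = exp (exp^[k] (w ^ 2)) * ε := by rw [exp_add, exp_log hε₀]

end IteratedExpLog

section TowerPow

noncomputable def towerPow (m : ℕ) (A s : ℝ) : ℝ := exp^[m] ((log^[m] s) ^ A)

theorem le_towerPow {m : ℕ} {A s : ℝ} (hA : 1 ≤ A) (hs : exp^[m] 1 ≤ s) : s ≤ towerPow m A s := by
  have h₀ : exp^[m] 0 ≤ s := ((expIter_strictMono m).monotone zero_le_one).trans hs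
  calc s = exp^[m] (log^[m] s) := (expIter_logIter h₀).symm
    _ ≤ towerPow m A s :=
        (expIter_strictMono m).monotone (self_le_rpow_of_one_le (one_le_logIter hs) hA)

theorem eventually_towerPow_le_rpow (M : ℝ → ℝ) (k : ℕ) {ρ q A ε : ℝ} (hρ : 1 ≤ ρ)
    (hA : 1 ≤ A) (hAq : 2 ≤ A * q) (hε₀ : 0 < ε) (hε₁ : ε ≤ 1)
    (hupper : ∀ᶠ r in atTop, M r ≤ exp (exp (ρ * log r)))
    (hlower : ∀ᶠ r in atTop, exp^[k + 3] ((log^[k + 2] r) ^ q) ≤ M r) :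
    ∀ᶠ s in atTop, towerPow (k + 2) A (M s) ≤ M (towerPow (k + 2) A s) ^ ε := by
  obtain ⟨S, hS⟩ := eventually_atTop.1 hlower
  filter_upwards [hupper, hlower, eventually_logIter_exp_exp_le k hρ,
    eventually_ge_atTop (max S (exp^[k + 2] 1)),
    (tendsto_logIter_atTop (k + 2)).eventually
      (eventually_expIter_le_rpow_expIter (k + 1) (a := 2 * A) (by positivity) hε₀ hε₁)]
    with s hup hlow hexp hs hcore
  set w := log^[k + 2] s
  have hgs : s ≤ towerPow (k + 2) A s := le_towerPow hA (le_of_max_le_right hs)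
  have hw₁ : 1 ≤ w := one_le_logIter (le_of_max_le_right hs)
  -- `exp^[k + 3] y = exp^[k + 2] (exp y)` and `0 ≤ exp y`.
  have hMs : exp^[k + 2] 0 ≤ M s := ((expIter_strictMono _).monotone (exp_pos _).le).trans hlow
  have hLM : log^[k + 2] (M s) ≤ exp (2 * w) := (logIter_le_logIter hMs hup).trans hexp
  have hMgs : exp^[k + 3] (w ^ 2) ≤ M (towerPow (k + 2) A s) := by
    refine le_trans ?_ (hS _ ((le_of_max_le_left hs).trans hgs))
    rw [towerPow, logIter_expIter, ← rpow_mul (by linarith), ← rpow_two]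
    exact (expIter_strictMono _).monotone (rpow_le_rpow_of_exponent_le hw₁ hAq)
  calc towerPow (k + 2) A (M s) ≤ exp^[k + 2] (exp (2 * w) ^ A) :=
        (expIter_strictMono _).monotone
          (rpow_le_rpow ((le_logIter_iff hMs).2 hMs) hLM (by linarith))
    _ = exp^[k + 3] (2 * A * w) := by
        rw [← exp_mul, mul_right_comm]
        rfl
    _ ≤ exp^[k + 3] (w ^ 2) ^ ε := hcore
    _ ≤ M (towerPow (k + 2) A s) ^ ε :=
        rpow_le_rpow ((exp_pos _).le.trans (le_expIter (k + 2) _)) hMgs hε₀.le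

end TowerPow

section MaxMod

theorem maxMod_nonneg (f : ℂ → ℂ) (r : ℝ) : 0 ≤ maxMod f r :=
  Real.sSup_nonneg (by rintro _ ⟨z, -, rfl⟩; exact norm_nonneg _)

theorem norm_le_maxMod {f : ℂ → ℂ} (hf : Continuous f) {r : ℝ} {z : ℂ} (hz : ‖z‖ = r) :
    ‖f z‖ ≤ maxMod f r := by
  have hsphere : {z : ℂ | ‖z‖ = r} = Metric.sphere 0 r := by ext; simp
  refine le_csSup ?_ ⟨z, hz, rfl⟩
  rw [hsphere]
  exact ((isCompact_sphere 0 r).image (continuous_norm.comp hf)).bddAbove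

theorem norm_le_maxMod_of_norm_le {f : ℂ → ℂ} (hf : Differentiable ℂ f) {r : ℝ} {z : ℂ}
    (hz : ‖z‖ ≤ r) : ‖f z‖ ≤ maxMod f r := by
  rcases hz.eq_or_lt with hz | hz
  · exact norm_le_maxMod hf.continuous hz
  have hr : r ≠ 0 := ((norm_nonneg z).trans_lt hz).ne'
  refine Complex.norm_le_of_forall_mem_frontier_norm_le Metric.isBounded_ball hf.diffContOnCl
    (fun w hw => ?_) (subset_closure (mem_ball_zero_iff.2 hz))
  rw [frontier_ball 0 hr, mem_sphere_zero_iff_norm] at hw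
  exact norm_le_maxMod hf.continuous hw

theorem maxMod_monotone {f : ℂ → ℂ} (hf : Differentiable ℂ f) : Monotone (maxMod f) :=
  fun _ y hxy => Real.sSup_le
    (by rintro _ ⟨z, hz : ‖z‖ = _, rfl⟩; exact norm_le_maxMod_of_norm_le hf (hz.trans_le hxy))
    (maxMod_nonneg f y)

theorem muEps_monotone {f : ℂ → ℂ} (hf : Differentiable ℂ f) {ε : ℝ} (hε : 0 ≤ ε) :
    Monotone (muEps f ε) :=
  fun _ _ hxy => rpow_le_rpow (maxMod_nonneg f _) (maxMod_monotone hf hxy) hε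

theorem epsRegular_of_eventually_le {f : ℂ → ℂ} (hf : Differentiable ℂ f) {ε : ℝ} (hε : 0 ≤ ε)
    {g : ℝ → ℝ} (hg : ∀ᶠ s in atTop, s ≤ g s)
    (hgM : ∀ᶠ s in atTop, g (maxMod f s) ≤ muEps f ε (g s)) : epsRegular f ε := by
  intro R hR₀ hR
  obtain ⟨S, hS⟩ := eventually_atTop.1 (hg.and hgM)
  set s₀ := max R S
  have hM := maxMod_monotone hf
  have horbit (k : ℕ) : S ≤ (maxMod f)^[k] s₀ :=
    (le_max_right R S).trans
      (hM.monotone_iterate_of_le_map (hR s₀ (le_max_left R S)).le (Nat.zero_le k))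
  refine ⟨g s₀, hR₀.trans_le ((le_max_left R S).trans (hS s₀ (le_max_right R S)).1), fun k => ?_⟩
  calc (maxMod f)^[k] R ≤ (maxMod f)^[k] s₀ := hM.iterate k (le_max_left R S)
    _ ≤ g ((maxMod f)^[k] s₀) := (hS _ (horbit k)).1
    _ ≤ (muEps f ε)^[k] (g s₀) :=
        (muEps_monotone hf hε).seq_le_seq (x := fun j => g ((maxMod f)^[j] s₀))
          (y := fun j => (muEps f ε)^[j] (g s₀)) k le_rfl
          (fun j _ => by
            simpa only [Function.iterate_succ_apply'] using (hS _ (horbit j)).2)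
          (fun j _ => (Function.iterate_succ_apply' _ _ _).ge)

end MaxMod

theorem eventually_le_exp_exp_of_log_log_div_log_le {M : ℝ → ℝ} {ρ : ℝ}
    (h : ∀ᶠ r in atTop, log (log (M r)) / log r ≤ ρ) :
    ∀ᶠ r in atTop, M r ≤ exp (exp (ρ * log r)) := by
  filter_upwards [h, tendsto_log_atTop.eventually_gt_atTop 0] with r hr hlog
  rcases le_or_gt (M r) 1 with hM | hM
  · exact hM.trans (one_le_exp (exp_pos _).le)
  · rw [div_le_iff₀ hlog] at hr
    rw [← log_le_iff_le_exp (zero_lt_one.trans hM), ← log_le_iff_le_exp (log_pos hM)]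
    linarith

theorem stmt_13 (f : ℂ → ℂ) (hf : TranscendentalEntire f)
    (horder : ∃ ρ : ℝ, ∀ᶠ r in atTop,
      Real.log (Real.log (maxMod f r)) / Real.log r ≤ ρ)
    (h : ∃ n : ℕ, ∃ q ∈ Ioo (0:ℝ) 1, ∀ᶠ r in atTop,
      Real.exp^[n + 1] ((Real.log^[n] r) ^ q) ≤ maxMod f r) :
    weaklyRegular f := by
  obtain ⟨hf, -⟩ := hf
  obtain ⟨ρ, hρ⟩ := horder
  obtain ⟨n, q, ⟨hq₀, hq₁⟩, hlower⟩ := h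
  have hupper := eventually_le_exp_exp_of_log_log_div_log_le
    (hρ.mono fun _ hr => hr.trans (le_max_left ρ 1))
  have hlower' : ∀ᶠ r in atTop, exp^[n + 3] ((log^[n + 2] r) ^ q) ≤ maxMod f r :=
    ((eventually_expIter_rpow_logIter_add_le n 2 hq₀ hq₁).and hlower).mono
      fun _ h => h.1.trans h.2
  have hA : 1 ≤ 2 / q := by rw [le_div_iff₀ hq₀]; linarith
  have hAq : 2 ≤ 2 / q * q := (div_mul_cancel₀ 2 hq₀.ne').ge
  rintro ε ⟨hε₀, hε₁⟩
  refine epsRegular_of_eventually_le hf hε₀.le (g := towerPow (n + 2) (2 / q)) ?_ ?_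
  · filter_upwards [eventually_ge_atTop (exp^[n + 2] 1)] with s hs using le_towerPow hA hs
  · exact eventually_towerPow_le_rpow _ n (le_max_right ρ 1) hA hAq hε₀ hε₁.le hupper hlower'
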